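/- arXiv:2312.09707 — 8 statements merged into one kernel-verified Lean document; each statement's English description precedes it below -/
import Mathlib

section
/- (Theorem on maximum diversification ratio attainment) Let ρ : ℝ₊ⁿ → ℝ be positive, convex and positively homogeneous of degree 1, and set ρⱼ = ρ(eⱼ). Let M denote the maximum over the simplex of (∑ⱼ λⱼ ρⱼ)/ρ(λ). Then for any m, any vectors X₁, …, Xₘ ∈ ℝ₊ⁿ each of whose coordinates sum to 1 (i.e., each Xᵢ is a convex combination of the standard basis vectors), and any weights α₁, …, αₘ ≥ 0 with ∑ᵢ αᵢ = 1 and ρ(∑ᵢ αᵢ Xᵢ) > 0, we have (∑ᵢ ρ(αᵢ Xᵢ)) / ρ(∑ᵢ αᵢ Xᵢ) ≤ M. In particular the supremum over all m of the greatest diversification ratio using m portfolios is attained with m = n using the standard basis vectors. -/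
theorem convOn_aux (n : ℕ) (ρ : (Fin n → ℝ) → ℝ)
    (hconv : ∀ x y : Fin n → ℝ, (∀ i, 0 ≤ x i) → (∀ i, 0 ≤ y i) →
      ∀ t : ℝ, 0 ≤ t → t ≤ 1 → ρ (t • x + (1 - t) • y) ≤ t * ρ x + (1 - t) * ρ y) :
    ConvexOn ℝ {x : Fin n → ℝ | ∀ i, 0 ≤ x i} ρ := by
  constructor
  · intro x hx y hy a b ha hb hab
    intro i
    have := hx i
    have := hy i
    simp only [Pi.add_apply, Pi.smul_apply, smul_eq_mul]
    positivity
  · intro x hx y hy a b ha hb hab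
    have hb' : b = 1 - a := by linarith
    subst hb'
    exact hconv x y hx hy a ha (by linarith)

/-- The maximum diversification ratio over decompositions into any number of
portfolios is bounded by the maximum `M` of the diversification ratio over the simplex,
attained using the standard basis vectors. -/
theorem stmt2 (n : ℕ) (ρ : (Fin n → ℝ) → ℝ) (M : ℝ)
    (hpos : ∀ x : Fin n → ℝ, (∀ i, 0 ≤ x i) → x ≠ 0 → 0 < ρ x)
    (hconv : ∀ x y : Fin n → ℝ, (∀ i, 0 ≤ x i) → (∀ i, 0 ≤ y i) →
      ∀ t : ℝ, 0 ≤ t → t ≤ 1 → ρ (t • x + (1 - t) • y) ≤ t * ρ x + (1 - t) * ρ y)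
    (hhom : ∀ x : Fin n → ℝ, (∀ i, 0 ≤ x i) → ∀ t : ℝ, 0 ≤ t → ρ (t • x) = t * ρ x)
    (hM : IsGreatest
      ((fun lam : Fin n → ℝ => (∑ j, lam j * ρ (Pi.single j 1)) / ρ lam) ''
        {lam : Fin n → ℝ | (∀ i, 0 ≤ lam i) ∧ (∑ i, lam i) = 1}) M) :
    ∀ (m : ℕ) (X : Fin m → Fin n → ℝ) (α : Fin m → ℝ),
      (∀ i, ∀ j, 0 ≤ X i j) → (∀ i, (∑ j, X i j) = 1) →
      (∀ i, 0 ≤ α i) → (∑ i, α i) = 1 →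
      0 < ρ (∑ i, α i • X i) →
      (∑ i, ρ (α i • X i)) / ρ (∑ i, α i • X i) ≤ M := by
  intro m X α hX hX1 hα hα1 hρpos
  set lam : Fin n → ℝ := ∑ i, α i • X i with hlam
  have hCO := convOn_aux n ρ hconv
  have hlam_nonneg : ∀ j, 0 ≤ lam j := by
    intro j
    rw [hlam]
    simp only [Finset.sum_apply, Pi.smul_apply, smul_eq_mul]
    exact Finset.sum_nonneg fun i _ => mul_nonneg (hα i) (hX i j)
  have hlam_sum : (∑ j, lam j) = 1 := by
    rw [hlam]
    simp only [Finset.sum_apply, Pi.smul_apply, smul_eq_mul]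
    rw [Finset.sum_comm]
    calc (∑ i, ∑ j, α i * X i j) = ∑ i, α i * ∑ j, X i j := by
          simp [Finset.mul_sum]
      _ = 1 := by simp [hX1, hα1]
  -- for each i, ρ (X i) ≤ ∑ j, X i j * ρ (e j)
  have key : ∀ i, ρ (X i) ≤ ∑ j, X i j * ρ (Pi.single j 1) := by
    intro i
    have hrepr : X i = ∑ j, X i j • (Pi.single j 1 : Fin n → ℝ) := by
      funext k
      simp only [Finset.sum_apply, Pi.smul_apply, Pi.single_apply, smul_eq_mul,
        mul_ite, mul_one, mul_zero]
      rw [Finset.sum_ite_eq]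
      simp
    have hle := ConvexOn.map_sum_le hCO (t := Finset.univ)
      (w := fun j => X i j) (p := fun j => Pi.single j 1)
      (fun j _ => hX i j) (hX1 i)
      (fun j _ => by
        intro k
        by_cases h : k = j <;> simp [Pi.single_apply, h])
    rw [← hrepr] at hle
    simpa [smul_eq_mul] using hle
  have hnum : (∑ i, ρ (α i • X i)) ≤ ∑ j, lam j * ρ (Pi.single j 1) := by
    have h1 : (∑ i, ρ (α i • X i)) = ∑ i, α i * ρ (X i) := by
      refine Finset.sum_congr rfl fun i _ => ?_
      exact hhom (X i) (hX i) (α i) (hα i)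
    rw [h1]
    have h2 : (∑ i, α i * ρ (X i)) ≤ ∑ i, α i * ∑ j, X i j * ρ (Pi.single j 1) :=
      Finset.sum_le_sum fun i _ => mul_le_mul_of_nonneg_left (key i) (hα i)
    refine h2.trans_eq ?_
    rw [hlam]
    simp only [Finset.sum_apply, Pi.smul_apply, smul_eq_mul, Finset.mul_sum,
      Finset.sum_mul]
    rw [Finset.sum_comm]
    congr 1; funext j; congr 1; funext i; ring
  have hmem : (∑ j, lam j * ρ (Pi.single j 1)) / ρ lam ∈
      ((fun lam : Fin n → ℝ => (∑ j, lam j * ρ (Pi.single j 1)) / ρ lam) ''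
        {lam : Fin n → ℝ | (∀ i, 0 ≤ lam i) ∧ (∑ i, lam i) = 1}) :=
    ⟨lam, ⟨hlam_nonneg, hlam_sum⟩, rfl⟩
  have hratio : (∑ i, ρ (α i • X i)) / ρ lam ≤ (∑ j, lam j * ρ (Pi.single j 1)) / ρ lam :=
    (div_le_div_iff_of_pos_right hρpos).mpr hnum
  exact hratio.trans (hM.2 hmem)
end

section
/- Let Σ be the constant-correlation covariance matrix Σᵢⱼ = c σᵢ σⱼ (i ≠ j), Σᵢᵢ = σᵢ², with σᵢ > 0 and 0 ≤ c < 1. Then the vector y* with coordinates y*ᵢ = 1/(n σᵢ) is the unique minimizer of yᵀ Σ y over the set {y ∈ ℝⁿ : ∑ᵢ σᵢ yᵢ = 1, y ≥ 0}. -/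
/-- For the constant-correlation covariance matrix with `σᵢ > 0` and
`0 ≤ c < 1`, the vector `y*ᵢ = 1/(n σᵢ)` is the unique minimizer of `yᵀ S y` over
`{y : ∑ᵢ σᵢ yᵢ = 1, y ≥ 0}`. -/
theorem stmt4 (n : ℕ) (hn : 2 ≤ n) (σ : Fin n → ℝ) (hσ : ∀ i, 0 < σ i)
    (c : ℝ) (hc1 : 0 ≤ c) (hc2 : c < 1)
    (S : Matrix (Fin n) (Fin n) ℝ)
    (hS : ∀ i j, S i j = if i = j then (σ i) ^ 2 else c * σ i * σ j)
    (ystar : Fin n → ℝ) (hystar : ∀ i, ystar i = 1 / ((n : ℝ) * σ i)) :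
    ((∀ i, 0 ≤ ystar i) ∧ (∑ i, σ i * ystar i) = 1) ∧
    ∀ y : Fin n → ℝ, (∀ i, 0 ≤ y i) → (∑ i, σ i * y i) = 1 →
      (∑ i, ∑ j, ystar i * S i j * ystar j) ≤ (∑ i, ∑ j, y i * S i j * y j) ∧
      ((∑ i, ∑ j, y i * S i j * y j) = (∑ i, ∑ j, ystar i * S i j * ystar j) → y = ystar) := by
  have hN : (0:ℝ) < (n:ℝ) := by
    have : 0 < n := lt_of_lt_of_le (by norm_num) hn
    exact_mod_cast this
  have hNne : (n:ℝ) ≠ 0 := ne_of_gt hN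
  -- quadratic form identity
  have hQ : ∀ y : Fin n → ℝ, (∑ i, ∑ j, y i * S i j * y j)
      = (1-c) * ∑ i, (σ i * y i)^2 + c * (∑ i, σ i * y i)^2 := by
    intro y
    have h1 : ∀ i j, y i * S i j * y j
        = c * ((σ i * y i) * (σ j * y j)) + (if i = j then (1-c) * (σ i * y i)^2 else 0) := by
      intro i j
      rw [hS]
      by_cases h : i = j
      · subst h; simp; ring
      · simp [h]; ring
    simp_rw [h1, Finset.sum_add_distrib, Finset.sum_ite_eq, Finset.mem_univ, if_true,
      ← Finset.mul_sum, ← Finset.sum_mul]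
    rw [sq (∑ i, σ i * y i)]
    ring
  -- ystar values
  have hxstar : ∀ i, σ i * ystar i = ((n:ℝ))⁻¹ := by
    intro i
    rw [hystar]
    rw [mul_one_div, mul_comm ((n:ℝ)) (σ i), ← div_div, div_self (hσ i).ne', one_div]
  have hsumstar : (∑ i, σ i * ystar i) = 1 := by
    simp only [hxstar]
    rw [Finset.sum_const, Finset.card_univ, Fintype.card_fin, nsmul_eq_mul,
      mul_inv_cancel₀ hNne]
  have hninv : (n:ℝ) * ((n:ℝ)⁻¹)^2 = (n:ℝ)⁻¹ := by
    field_simp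
  have hQstar : (∑ i, ∑ j, ystar i * S i j * ystar j) = (1-c) * ((n:ℝ))⁻¹ + c := by
    rw [hQ, hsumstar]
    simp only [hxstar]
    rw [Finset.sum_const, Finset.card_univ, Fintype.card_fin, nsmul_eq_mul, hninv]
    ring
  refine ⟨⟨fun i => by rw [hystar]; have := hσ i; positivity, hsumstar⟩, ?_⟩
  intro y hy hsum
  -- key: ∑ x² = 1/n + ∑ (x - 1/n)²
  have hkey : (∑ i, (σ i * y i)^2)
      = ((n:ℝ))⁻¹ + ∑ i, (σ i * y i - ((n:ℝ))⁻¹)^2 := by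
    have expand : ∀ i, (σ i * y i - ((n:ℝ))⁻¹)^2
        = (σ i * y i)^2 - 2*((n:ℝ))⁻¹ * (σ i * y i) + ((n:ℝ))⁻¹^2 := by
      intro i; ring
    simp_rw [expand, Finset.sum_add_distrib, Finset.sum_sub_distrib, ← Finset.mul_sum, hsum,
      Finset.sum_const, Finset.card_univ, Fintype.card_fin, nsmul_eq_mul]
    field_simp
    ring
  have hQy : (∑ i, ∑ j, y i * S i j * y j)
      = (1-c) * ((n:ℝ))⁻¹ + c + (1-c) * ∑ i, (σ i * y i - ((n:ℝ))⁻¹)^2 := by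
    rw [hQ, hsum, hkey]; ring
  have hnn : 0 ≤ ∑ i, (σ i * y i - ((n:ℝ))⁻¹)^2 :=
    Finset.sum_nonneg fun i _ => sq_nonneg _
  have hc' : 0 < 1 - c := by linarith
  constructor
  · rw [hQstar, hQy]
    nlinarith
  · intro heq
    rw [hQstar, hQy] at heq
    have hzero : (∑ i, (σ i * y i - ((n:ℝ))⁻¹)^2) = 0 := by
      nlinarith
    have hall : ∀ i ∈ Finset.univ, (σ (i : Fin n) * y i - ((n:ℝ))⁻¹)^2 = 0 :=
      (Finset.sum_eq_zero_iff_of_nonneg (fun i _ => sq_nonneg _)).mp hzero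
    funext i
    have h0 : σ i * y i = ((n:ℝ))⁻¹ := by
      have := hall i (Finset.mem_univ i)
      have := sq_eq_zero_iff.mp this
      linarith
    have hσi := (hσ i).ne'
    have hne : (n:ℝ) * σ i ≠ 0 := mul_ne_zero hNne hσi
    rw [hystar i, eq_div_iff hne]
    have h1 : y i * ((n:ℝ) * σ i) = (n:ℝ) * (σ i * y i) := by ring
    rw [h1, h0, mul_inv_cancel₀ hNne]
end

section
/- For the constant-correlation covariance matrix Σ (Σᵢⱼ = c σᵢ σⱼ for i ≠ j, Σᵢᵢ = σᵢ², σᵢ > 0, 0 ≤ c < 1), the maximum diversification portfolio x^MD with weights xᵢ = σᵢ⁻¹ / ∑ⱼ σⱼ⁻¹ maximizes the diversification ratio DR(x) = (∑ᵢ xᵢ σᵢ) / √(xᵀ Σ x) over the simplex Δ = {x : ∑ xᵢ = 1, x ≥ 0}. -/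
/-!
Put `yᵢ = xᵢ σᵢ` and `s = ∑ yᵢ`. The constant-correlation quadratic form is
`xᵀ S x = (1 - c) ∑ yᵢ² + c s²`, and Cauchy–Schwarz `∑ yᵢ² ≥ s² / n` gives `xᵀ S x ≥ k s²` with
`k = (1 - c) / n + c > 0`; hence `DR x ≤ 1 / √k` whenever `s > 0`. The portfolio `x^MD` makes all
`yᵢ` equal, so Cauchy–Schwarz is an equality there and `DR x^MD = 1 / √k`.
-/

open Finset

section ConstantCorrelation

variable {ι : Type*} [Fintype ι]

theorem quadForm_constCorr [DecidableEq ι] (σ x : ι → ℝ) (c : ℝ) (S : Matrix ι ι ℝ)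
    (hS : ∀ i j, S i j = if i = j then σ i ^ 2 else c * σ i * σ j) :
    ∑ i, ∑ j, x i * S i j * x j =
      (1 - c) * ∑ i, (x i * σ i) ^ 2 + c * (∑ i, x i * σ i) ^ 2 := by
  have hentry : ∀ i j, x i * S i j * x j =
      c * (x i * σ i) * (x j * σ j) + if i = j then (1 - c) * (x i * σ i) ^ 2 else 0 := by
    intro i j
    rw [hS]
    split_ifs with h
    · subst h; ring
    · ring
  simp only [hentry, sum_add_distrib, sum_ite_eq, mem_univ, if_true, ← mul_sum, ← sum_mul]
  ring

theorem sq_sum_mul_le_constCorr (y : ι → ℝ) {c : ℝ} (hc : c ≤ 1) :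
    (∑ i, y i) ^ 2 * ((1 - c) / Fintype.card ι + c) ≤
      (1 - c) * ∑ i, y i ^ 2 + c * (∑ i, y i) ^ 2 := by
  have hCS : (∑ i, y i) ^ 2 / Fintype.card ι ≤ ∑ i, y i ^ 2 :=
    div_le_of_le_mul₀ (Nat.cast_nonneg _) (sum_nonneg fun i _ => sq_nonneg (y i))
      (by simpa [mul_comm] using sq_sum_le_card_mul_sum_sq (s := univ) (f := y))
  calc (∑ i, y i) ^ 2 * ((1 - c) / Fintype.card ι + c)
      = (1 - c) * ((∑ i, y i) ^ 2 / Fintype.card ι) + c * (∑ i, y i) ^ 2 := by ring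
    _ ≤ (1 - c) * ∑ i, y i ^ 2 + c * (∑ i, y i) ^ 2 := by gcongr

theorem sq_sum_const_mul_eq_constCorr [Nonempty ι] (a c : ℝ) :
    (∑ _i : ι, a) ^ 2 * ((1 - c) / Fintype.card ι + c) =
      (1 - c) * ∑ _i : ι, a ^ 2 + c * (∑ _i : ι, a) ^ 2 := by
  have hcard : (Fintype.card ι : ℝ) ≠ 0 := Nat.cast_ne_zero.2 Fintype.card_ne_zero
  simp only [sum_const, card_univ, nsmul_eq_mul]
  field_simp

theorem sum_mul_pos_of_sum_pos {x σ : ι → ℝ} (hx : ∀ i, 0 ≤ x i) (hσ : ∀ i, 0 < σ i)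
    (hsum : 0 < ∑ i, x i) : 0 < ∑ i, x i * σ i := by
  obtain ⟨i, -, hi⟩ := exists_lt_of_sum_lt (s := univ) (f := fun _ => (0 : ℝ)) (g := x)
    (by simpa using hsum)
  exact sum_pos' (fun j _ => mul_nonneg (hx j) (hσ j).le) ⟨i, mem_univ i, mul_pos hi (hσ i)⟩

end ConstantCorrelation

theorem div_sqrt_sq_mul {s : ℝ} (hs : 0 < s) (k : ℝ) : s / √(s ^ 2 * k) = 1 / √k := by
  rw [Real.sqrt_mul (sq_nonneg s), Real.sqrt_sq hs.le, div_mul_cancel_left₀ hs.ne', one_div]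

theorem div_sqrt_le_one_div_sqrt {s k D : ℝ} (hs : 0 < s) (hk : 0 < k) (h : s ^ 2 * k ≤ D) :
    s / √D ≤ 1 / √k := by
  rw [← div_sqrt_sq_mul hs k]
  exact div_le_div_of_nonneg_left hs.le (by positivity) (Real.sqrt_le_sqrt h)

/-- For the constant-correlation covariance matrix, the portfolio
`xᵢ = σᵢ⁻¹ / ∑ⱼ σⱼ⁻¹` maximizes the diversification ratio
`DR(x) = (∑ᵢ xᵢ σᵢ)/√(xᵀSx)` over the standard simplex. -/
theorem stmt5 (n : ℕ) (hn : 2 ≤ n) (σ : Fin n → ℝ) (hσ : ∀ i, 0 < σ i)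
    (c : ℝ) (hc1 : 0 ≤ c) (hc2 : c < 1)
    (S : Matrix (Fin n) (Fin n) ℝ)
    (hS : ∀ i j, S i j = if i = j then (σ i) ^ 2 else c * σ i * σ j)
    (xMD : Fin n → ℝ) (hxMD : ∀ i, xMD i = (σ i)⁻¹ / ∑ j, (σ j)⁻¹)
    (DR : (Fin n → ℝ) → ℝ)
    (hDR : ∀ x, DR x = (∑ i, x i * σ i) / Real.sqrt (∑ i, ∑ j, x i * S i j * x j)) :
    ((∀ i, 0 ≤ xMD i) ∧ (∑ i, xMD i) = 1) ∧
    ∀ x : Fin n → ℝ, (∀ i, 0 ≤ x i) → (∑ i, x i) = 1 → DR x ≤ DR xMD := by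
  have : Nonempty (Fin n) := ⟨⟨0, by omega⟩⟩
  set T := ∑ j, (σ j)⁻¹
  have hT : 0 < T := sum_pos (fun j _ => inv_pos.2 (hσ j)) univ_nonempty
  have hxMD_nonneg : ∀ i, 0 ≤ xMD i := fun i => by
    rw [hxMD]; exact div_nonneg (inv_nonneg.2 (hσ i).le) hT.le
  have hxMD_sum : ∑ i, xMD i = 1 := by
    simp only [hxMD, ← sum_div]; exact div_self hT.ne'
  refine ⟨⟨hxMD_nonneg, hxMD_sum⟩, fun x hx hx1 => ?_⟩
  set k := (1 - c) / Fintype.card (Fin n) + c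
  have hk : 0 < k := add_pos_of_pos_of_nonneg
    (div_pos (by linarith) (Nat.cast_pos.2 Fintype.card_pos)) hc1
  have hyMD : ∀ i, xMD i * σ i = T⁻¹ := fun i => by
    rw [hxMD, div_mul_eq_mul_div, inv_mul_cancel₀ (hσ i).ne', one_div]
  calc DR x ≤ 1 / √k := by
        rw [hDR, quadForm_constCorr σ x c S hS]
        exact div_sqrt_le_one_div_sqrt (sum_mul_pos_of_sum_pos hx hσ (hx1 ▸ one_pos)) hk
          (sq_sum_mul_le_constCorr _ hc2.le)
    _ = DR xMD := by
        rw [hDR, quadForm_constCorr σ xMD c S hS]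
        simp only [hyMD]
        rw [← sq_sum_const_mul_eq_constCorr, div_sqrt_sq_mul (by positivity)]
end

section
/- (Equivalence of Maximum Diversification and Risk Parity under equicorrelation) For the constant-correlation covariance matrix Σ with σᵢ > 0 and 0 ≤ c < 1, the portfolio x with xᵢ = σᵢ⁻¹/∑ⱼ σⱼ⁻¹ satisfies the Risk Parity condition for volatility ρ(x) = √(xᵀΣx): the total risk contributions xᵢ ∂ρ/∂xᵢ(x) = xᵢ (Σx)ᵢ / √(xᵀΣx) are equal for all i. -/
/-!
Under constant correlation, `(Σx)ᵢ = (1 - c) σᵢ² xᵢ + c σᵢ ∑ⱼ σⱼ xⱼ`, so `xᵢ (Σx)ᵢ` depends on `i`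
only through the risk-scaled weight `σᵢ xᵢ`. Inverse-volatility weights make `σᵢ xᵢ` constant.
-/

open Finset Matrix

def equicorrelation {ι : Type*} [DecidableEq ι] (σ : ι → ℝ) (c : ℝ) : Matrix ι ι ℝ :=
  Matrix.of fun i j => if i = j then σ i ^ 2 else c * σ i * σ j

section

variable {ι : Type*} [Fintype ι] [DecidableEq ι] (σ : ι → ℝ) (c : ℝ)

theorem equicorrelation_mulVec (v : ι → ℝ) (i : ι) :
    (equicorrelation σ c *ᵥ v) i = (1 - c) * σ i ^ 2 * v i + c * σ i * ∑ j, σ j * v j := by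
  have hentry : ∀ j, equicorrelation σ c i j * v j =
      (if i = j then (1 - c) * σ i ^ 2 * v i else 0) + c * σ i * (σ j * v j) := by
    intro j
    by_cases h : i = j
    · subst h; simp only [equicorrelation, of_apply, if_true]; ring
    · simp only [equicorrelation, of_apply, h, if_false]; ring
  simp only [mulVec, dotProduct, hentry, sum_add_distrib, sum_ite_eq, mem_univ, if_true, mul_sum]

theorem mul_equicorrelation_mulVec_of_forall_mul_eq {x : ι → ℝ} {a : ℝ}
    (h : ∀ i, σ i * x i = a) (i : ι) :
    x i * (equicorrelation σ c *ᵥ x) i = a ^ 2 * (1 - c + c * Fintype.card ι) := by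
  rw [equicorrelation_mulVec]
  simp only [h, sum_const, card_univ, nsmul_eq_mul]
  linear_combination ((1 - c) * (σ i * x i + a) + c * Fintype.card ι * a) * h i

end

theorem stmt6_general (n : ℕ) (σ : Fin n → ℝ) (hσ : ∀ i, 0 < σ i)
    (c : ℝ)
    (S : Matrix (Fin n) (Fin n) ℝ)
    (hS : ∀ i j, S i j = if i = j then (σ i) ^ 2 else c * σ i * σ j)
    (x : Fin n → ℝ) (hx : ∀ i, x i = (σ i)⁻¹ / ∑ j, (σ j)⁻¹) :
    ∀ i j, x i * (S.mulVec x) i / Real.sqrt (∑ k, ∑ l, x k * S k l * x l)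
         = x j * (S.mulVec x) j / Real.sqrt (∑ k, ∑ l, x k * S k l * x l) := by
  have hS' : S = equicorrelation σ c := by
    ext i j
    exact hS i j
  have hscaled : ∀ i, σ i * x i = (∑ j, (σ j)⁻¹)⁻¹ := by
    intro i
    rw [hx, mul_div_assoc', mul_inv_cancel₀ (hσ i).ne', one_div]
  intro i j
  rw [hS', mul_equicorrelation_mulVec_of_forall_mul_eq σ c hscaled,
    mul_equicorrelation_mulVec_of_forall_mul_eq σ c hscaled]

/-- Under equicorrelation, the portfolio with weights proportional to inverse
volatilities satisfies the Risk Parity condition: all total risk contributions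
`TRCᵢ(x) = xᵢ (Sx)ᵢ / √(xᵀSx)` are equal. -/
theorem stmt6 (n : ℕ) (hn : 2 ≤ n) (σ : Fin n → ℝ) (hσ : ∀ i, 0 < σ i)
    (c : ℝ) (hc1 : 0 ≤ c) (hc2 : c < 1)
    (S : Matrix (Fin n) (Fin n) ℝ)
    (hS : ∀ i j, S i j = if i = j then (σ i) ^ 2 else c * σ i * σ j)
    (x : Fin n → ℝ) (hx : ∀ i, x i = (σ i)⁻¹ / ∑ j, (σ j)⁻¹) :
    ∀ i j, x i * (S.mulVec x) i / Real.sqrt (∑ k, ∑ l, x k * S k l * x l)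
         = x j * (S.mulVec x) j / Real.sqrt (∑ k, ∑ l, x k * S k l * x l) :=
  stmt6_general n σ hσ c S hS x hx
end

section
/- (Schaible transform correctness) Let ρ : ℝ₊ⁿ → ℝ be positive, convex, and positively homogeneous of degree 1, and write ρᵢ = ρ(eᵢ) > 0. If y* ∈ ℝ₊ⁿ minimizes ρ(y) over F = {y ≥ 0 : ∑ᵢ ρᵢ yᵢ = 1, ∑ᵢ μᵢ yᵢ ≥ η ∑ᵢ yᵢ}, and F is nonempty, then x* defined by x*ᵢ = y*ᵢ / ∑ₖ y*ₖ maximizes the diversification ratio DR(x) = (∑ᵢ xᵢ ρᵢ)/ρ(x) over the set {x ∈ Δ : ∑ᵢ μᵢ xᵢ ≥ η}, where Δ is the standard simplex. -/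
/-- (Schaible transform correctness) If `y*` minimizes `ρ(y)` over
`F = {y ≥ 0 : ∑ᵢ ρᵢ yᵢ = 1, ∑ᵢ μᵢ yᵢ ≥ η ∑ᵢ yᵢ}`, then the normalization
`x* = y*/∑ₖ y*ₖ` maximizes the diversification ratio `DR(x) = (∑ᵢ xᵢ ρᵢ)/ρ(x)` over
`{x ∈ Δ : ∑ᵢ μᵢ xᵢ ≥ η}`. -/
theorem stmt8 (n : ℕ) (ρ : (Fin n → ℝ) → ℝ) (μ : Fin n → ℝ) (η : ℝ)
    (hpos : ∀ x : Fin n → ℝ, (∀ i, 0 ≤ x i) → x ≠ 0 → 0 < ρ x)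
    (hconv : ∀ x y : Fin n → ℝ, (∀ i, 0 ≤ x i) → (∀ i, 0 ≤ y i) →
      ∀ t : ℝ, 0 ≤ t → t ≤ 1 → ρ (t • x + (1 - t) • y) ≤ t * ρ x + (1 - t) * ρ y)
    (hhom : ∀ x : Fin n → ℝ, (∀ i, 0 ≤ x i) → ∀ t : ℝ, 0 ≤ t → ρ (t • x) = t * ρ x)
    (F : Set (Fin n → ℝ))
    (hF : F = {y : Fin n → ℝ | (∀ i, 0 ≤ y i) ∧ (∑ i, ρ (Pi.single i 1) * y i) = 1 ∧
      (∑ i, μ i * y i) ≥ η * ∑ i, y i})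
    (ystar : Fin n → ℝ) (hyF : ystar ∈ F) (hymin : ∀ y ∈ F, ρ ystar ≤ ρ y)
    (xstar : Fin n → ℝ) (hxstar : ∀ i, xstar i = ystar i / ∑ k, ystar k) :
    ((∀ i, 0 ≤ xstar i) ∧ (∑ i, xstar i) = 1 ∧ (∑ i, μ i * xstar i) ≥ η) ∧
    ∀ x : Fin n → ℝ, (∀ i, 0 ≤ x i) → (∑ i, x i) = 1 → (∑ i, μ i * x i) ≥ η →
      (∑ i, x i * ρ (Pi.single i 1)) / ρ x
        ≤ (∑ i, xstar i * ρ (Pi.single i 1)) / ρ xstar := by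
  subst hF
  obtain ⟨hy0, hy1, hy2⟩ := hyF
  set r : Fin n → ℝ := fun i => ρ (Pi.single i 1) with hr
  have hrpos : ∀ i, 0 < r i := by
    intro i
    apply hpos
    · intro j
      rcases eq_or_ne j i with h | h
      · subst h; simp
      · simp [Pi.single_eq_of_ne h]
    · intro h
      have := congrFun h i
      simp at this
  -- sum of ystar is positive
  have hyne : ystar ≠ 0 := by
    intro h
    rw [h] at hy1
    simp at hy1
  have hSnn : 0 ≤ ∑ k, ystar k := Finset.sum_nonneg fun i _ => hy0 i
  have hS : 0 < ∑ k, ystar k := by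
    rcases hSnn.lt_or_eq with h | h
    · exact h
    · exfalso
      apply hyne
      funext i
      have := (Finset.sum_eq_zero_iff_of_nonneg (fun i _ => hy0 i)).1 h.symm i (Finset.mem_univ i)
      simpa using this
  set S := ∑ k, ystar k with hSdef
  have hxeq : xstar = (1 / S) • ystar := by
    funext i
    simp [hxstar i, div_eq_inv_mul, ← hSdef]
  have hρy : 0 < ρ ystar := hpos ystar hy0 hyne
  have hρx : ρ xstar = (1 / S) * ρ ystar := by
    rw [hxeq]
    exact hhom ystar hy0 (1 / S) (by positivity)
  have hx0 : ∀ i, 0 ≤ xstar i := by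
    intro i
    rw [hxstar i]
    exact div_nonneg (hy0 i) hSnn
  have hxsum : (∑ i, xstar i) = 1 := by
    have : (∑ i, xstar i) = (∑ i, ystar i) / S := by
      rw [Finset.sum_div]
      exact Finset.sum_congr rfl fun i _ => hxstar i
    rw [this, ← hSdef, div_self hS.ne']
  have hxmu : (∑ i, μ i * xstar i) ≥ η := by
    have : (∑ i, μ i * xstar i) = (∑ i, μ i * ystar i) / S := by
      rw [Finset.sum_div]
      exact Finset.sum_congr rfl fun i _ => by rw [hxstar i, mul_div_assoc]
    rw [this, ge_iff_le, le_div_iff₀ hS]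
    calc η * S = η * ∑ i, ystar i := rfl
      _ ≤ ∑ i, μ i * ystar i := hy2
  refine ⟨⟨hx0, hxsum, hxmu⟩, ?_⟩
  -- DR(xstar) = 1 / ρ ystar
  have hDRx : (∑ i, xstar i * r i) / ρ xstar = 1 / ρ ystar := by
    have hnum : (∑ i, xstar i * r i) = 1 / S := by
      have : (∑ i, xstar i * r i) = (∑ i, r i * ystar i) / S := by
        rw [Finset.sum_div]
        refine Finset.sum_congr rfl fun i _ => ?_
        rw [hxstar i, div_mul_eq_mul_div, mul_comm]
      rw [this, hy1]
    rw [hnum, hρx]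
    rw [div_mul_eq_div_div, div_self (one_div_ne_zero hS.ne')]
  intro x hx0' hx1 hx2
  set c := ∑ i, x i * r i with hc
  have hxne : x ≠ 0 := by
    intro h
    rw [h] at hx1
    simp at hx1
  have hcpos : 0 < c := by
    obtain ⟨i, hi⟩ : ∃ i, 0 < x i := by
      by_contra h
      push_neg at h
      apply hxne
      funext i
      exact le_antisymm (h i) (hx0' i)
    have : x i * r i ≤ c :=
      Finset.single_le_sum (fun j _ => mul_nonneg (hx0' j) (hrpos j).le) (Finset.mem_univ i)
    exact lt_of_lt_of_le (mul_pos hi (hrpos i)) this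
  have hρxpos : 0 < ρ x := hpos x hx0' hxne
  -- y := (1/c) • x is in F
  have hyF' : ((1 / c) • x) ∈ {y : Fin n → ℝ | (∀ i, 0 ≤ y i) ∧
      (∑ i, ρ (Pi.single i 1) * y i) = 1 ∧ (∑ i, μ i * y i) ≥ η * ∑ i, y i} := by
    refine ⟨fun i => ?_, ?_, ?_⟩
    · have : ((1 / c) • x) i = (1 / c) * x i := rfl
      rw [this]
      exact mul_nonneg (one_div_nonneg.2 hcpos.le) (hx0' i)
    · have : (∑ i, r i * ((1 / c) • x) i) = (1 / c) * ∑ i, x i * r i := by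
        rw [Finset.mul_sum]
        refine Finset.sum_congr rfl fun i _ => ?_
        simp [Pi.smul_apply, smul_eq_mul]; ring
      rw [show (∑ i, ρ (Pi.single i 1) * ((1 / c) • x) i) = ∑ i, r i * ((1 / c) • x) i from rfl,
        this, ← hc, one_div, inv_mul_cancel₀ hcpos.ne']
    · have h1 : (∑ i, μ i * ((1 / c) • x) i) = (1 / c) * ∑ i, μ i * x i := by
        rw [Finset.mul_sum]
        refine Finset.sum_congr rfl fun i _ => ?_
        simp [Pi.smul_apply, smul_eq_mul]; ring
      have h2 : (∑ i, ((1 / c) • x) i) = (1 / c) * ∑ i, x i := by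
        rw [Finset.mul_sum]; rfl
      rw [h1, h2]
      have : η * ∑ i, x i ≤ ∑ i, μ i * x i := by rw [hx1, mul_one]; exact hx2
      calc η * ((1 / c) * ∑ i, x i) = (1 / c) * (η * ∑ i, x i) := by ring
        _ ≤ (1 / c) * ∑ i, μ i * x i := by
            apply mul_le_mul_of_nonneg_left this (by positivity)
  have hmin := hymin _ hyF'
  have hρscale : ρ ((1 / c) • x) = (1 / c) * ρ x := hhom x hx0' (1 / c) (by positivity)
  rw [hρscale] at hmin
  -- now: ρ ystar ≤ ρ x / c, conclude c / ρ x ≤ 1 / ρ ystar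
  rw [hDRx]
  rw [div_le_div_iff₀ hρxpos hρy]
  calc c * ρ ystar ≤ c * ((1 / c) * ρ x) := by
        apply mul_le_mul_of_nonneg_left hmin hcpos.le
    _ = ρ x := by field_simp
    _ = 1 * ρ x := (one_mul _).symm
end

section
/- For portfolio weights x ≥ 0 with ∑ᵢ xᵢ = 1 and risk measure ρ positive, convex, positively homogeneous with ρᵢ = ρ(eᵢ), the map x ↦ y = x / (∑ᵢ xᵢ ρᵢ) is a bijection between {x ∈ Δ : ∑ᵢ μᵢ xᵢ ≥ η} and {y ≥ 0 : ∑ᵢ ρᵢ yᵢ = 1, ∑ᵢ μᵢ yᵢ ≥ η ∑ᵢ yᵢ}, with inverse y ↦ y / ∑ᵢ yᵢ, and it transforms 1/DR(x) = ρ(x)/(∑ᵢ xᵢ ρᵢ) into ρ(y). -/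
/-!
Both sets are slices of the cone `{x ≥ 0 | ∑ μᵢ xᵢ ≥ η ∑ xᵢ}`, by the hyperplanes `∑ xᵢ = 1` and
`∑ ρᵢ xᵢ = 1`. The two maps are the radial projections between these slices, so they are mutually
inverse bijections, and positive homogeneity of `ρ` gives `ρ (x / s) = ρ x / s`.
-/

section Normalize

variable {K M : Type*} [Field K] [AddCommGroup M] [Module K M]

/-- The radial projection onto the hyperplane `φ = 1`; it sends `x` to `0` when `φ x = 0`. -/
def normalizeBy (φ : M →ₗ[K] K) (x : M) : M := (φ x)⁻¹ • x

variable {φ ψ : M →ₗ[K] K} {x : M}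

lemma map_normalizeBy (hx : φ x ≠ 0) : φ (normalizeBy φ x) = 1 := by
  rw [normalizeBy, map_smul, smul_eq_mul, inv_mul_cancel₀ hx]

lemma normalizeBy_of_map_eq_one (hx : φ x = 1) : normalizeBy φ x = x := by
  rw [normalizeBy, hx, inv_one, one_smul]

lemma normalizeBy_smul {c : K} (hc : c ≠ 0) (x : M) :
    normalizeBy φ (c • x) = normalizeBy φ x := by
  rw [normalizeBy, normalizeBy, map_smul, smul_eq_mul, smul_smul, mul_inv_rev, mul_assoc,
    inv_mul_cancel₀ hc, mul_one]

lemma normalizeBy_normalizeBy (hx : ψ x ≠ 0) :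
    normalizeBy φ (normalizeBy ψ x) = normalizeBy φ x :=
  normalizeBy_smul (inv_ne_zero hx) x

lemma ne_zero_of_map_eq_one (hx : φ x = 1) : x ≠ 0 := by
  rintro rfl
  simp at hx

end Normalize

section Slices

variable {K M : Type*} [Field K] [LinearOrder K] [AddCommGroup M] [Module K M] {C : Set M}
  {ν ν' : M →ₗ[K] K}

lemma mapsTo_normalizeBy [IsStrictOrderedRing K] (hC : ∀ x ∈ C, ∀ c : K, 0 ≤ c → c • x ∈ C)
    (hν' : ∀ x ∈ C, x ≠ 0 → 0 < ν' x) :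
    Set.MapsTo (normalizeBy ν') {x ∈ C | ν x = 1} {x ∈ C | ν' x = 1} := by
  rintro x ⟨hxC, hx⟩
  have hpos := hν' x hxC (ne_zero_of_map_eq_one hx)
  exact ⟨hC x hxC _ (inv_nonneg.2 hpos.le), map_normalizeBy hpos.ne'⟩

lemma leftInvOn_normalizeBy (hν' : ∀ x ∈ C, x ≠ 0 → 0 < ν' x) :
    Set.LeftInvOn (normalizeBy ν) (normalizeBy ν') {x ∈ C | ν x = 1} := by
  rintro x ⟨hxC, hx⟩
  rw [normalizeBy_normalizeBy (hν' x hxC (ne_zero_of_map_eq_one hx)).ne',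
    normalizeBy_of_map_eq_one hx]

end Slices

section ReturnCone

variable {K M : Type*} [Field K] [LinearOrder K] [AddCommGroup M] [PartialOrder M] [Module K M]

/-- With `σ x = ∑ xᵢ` and `m x = ∑ μᵢ xᵢ`, the slice `σ = 1` of this cone is the set of
portfolios in the simplex with expected return at least `η`. -/
def returnCone (σ m : M →ₗ[K] K) (η : K) : Set M := {x | 0 ≤ x ∧ η * σ x ≤ m x}

lemma smul_mem_returnCone [IsStrictOrderedRing K] [PosSMulMono K M] {σ m : M →ₗ[K] K} {η : K}
    {x : M} (hx : x ∈ returnCone σ m η) {c : K} (hc : 0 ≤ c) : c • x ∈ returnCone σ m η := by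
  refine ⟨smul_nonneg hc hx.1, ?_⟩
  rw [map_smul, map_smul, smul_eq_mul, smul_eq_mul, mul_left_comm]
  exact mul_le_mul_of_nonneg_left hx.2 hc

lemma setOf_mem_returnCone_and_map_eq_one (σ m : M →ₗ[K] K) (η : K) :
    {x ∈ returnCone σ m η | σ x = 1} = {x | 0 ≤ x ∧ σ x = 1 ∧ η ≤ m x} := by
  ext x
  constructor
  · rintro ⟨⟨hx, hm⟩, hσ⟩
    exact ⟨hx, hσ, by simpa [hσ] using hm⟩
  · rintro ⟨hx, hσ, hm⟩
    exact ⟨⟨hx, by simpa [hσ] using hm⟩, hσ⟩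

lemma map_normalizeBy_of_posHomogeneous [IsStrictOrderedRing K] {ρ : M → K}
    (hρ : ∀ x, 0 ≤ x → ∀ t : K, 0 ≤ t → ρ (t • x) = t * ρ x) {φ : M →ₗ[K] K} {x : M}
    (hx : 0 ≤ x) (hφ : 0 ≤ φ x) : ρ (normalizeBy φ x) = ρ x / φ x := by
  rw [normalizeBy, hρ x hx _ (inv_nonneg.2 hφ), inv_mul_eq_div]

end ReturnCone

lemma dotProduct_pos_of_ne_zero {R ι : Type*} [Semiring R] [PartialOrder R]
    [IsStrictOrderedRing R] [Fintype ι] {w x : ι → R} (hw : ∀ i, 0 < w i) (hx : 0 ≤ x)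
    (hx0 : x ≠ 0) : 0 < w ⬝ᵥ x := by
  obtain ⟨hle, i, hi⟩ := Pi.lt_def.1 (lt_of_le_of_ne hx (Ne.symm hx0))
  exact Finset.sum_pos' (fun j _ => mul_nonneg (hw j).le (hle j))
    ⟨i, Finset.mem_univ i, mul_pos (hw i) hi⟩

theorem stmt9_general (n : ℕ) (ρ : (Fin n → ℝ) → ℝ) (μ : Fin n → ℝ) (η : ℝ)
    (hpos : ∀ x : Fin n → ℝ, (∀ i, 0 ≤ x i) → x ≠ 0 → 0 < ρ x)
    (hhom : ∀ x : Fin n → ℝ, (∀ i, 0 ≤ x i) → ∀ t : ℝ, 0 ≤ t → ρ (t • x) = t * ρ x)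
    (A B : Set (Fin n → ℝ))
    (hA : A = {x : Fin n → ℝ | (∀ i, 0 ≤ x i) ∧ (∑ i, x i) = 1 ∧ (∑ i, μ i * x i) ≥ η})
    (hB : B = {y : Fin n → ℝ | (∀ i, 0 ≤ y i) ∧ (∑ i, ρ (Pi.single i 1) * y i) = 1 ∧
      (∑ i, μ i * y i) ≥ η * ∑ i, y i})
    (f g : (Fin n → ℝ) → (Fin n → ℝ))
    (hf : ∀ x, f x = (∑ i, x i * ρ (Pi.single i 1))⁻¹ • x)
    (hg : ∀ y, g y = (∑ i, y i)⁻¹ • y) :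
    (∀ x ∈ A, f x ∈ B) ∧ (∀ y ∈ B, g y ∈ A) ∧
    (∀ x ∈ A, g (f x) = x) ∧ (∀ y ∈ B, f (g y) = y) ∧
    (∀ x ∈ A, ρ (f x) = ρ x / (∑ i, x i * ρ (Pi.single i 1))) := by
  set w : Fin n → ℝ := fun i => ρ (Pi.single i 1)
  have hw : ∀ i, 0 < w i := fun i =>
    hpos _ (Pi.single_nonneg.2 zero_le_one : (0 : Fin n → ℝ) ≤ _) (by simp)
  set σ := dotProductBilin ℝ ℝ (1 : Fin n → ℝ)
  set ω := dotProductBilin ℝ ℝ w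
  set C := returnCone σ (dotProductBilin ℝ ℝ μ) η
  have hA' : A = {x ∈ C | σ x = 1} := by
    rw [hA, setOf_mem_returnCone_and_map_eq_one]
    simp only [σ, dotProductBilin_apply_apply, one_dotProduct, ge_iff_le]
    rfl
  have hB' : B = {x ∈ C | ω x = 1} := by
    rw [hB]
    ext x
    simp only [Set.mem_ofPred_eq, C, returnCone, σ, dotProductBilin_apply_apply, one_dotProduct]
    exact ⟨fun ⟨h0, h1, h2⟩ => ⟨⟨h0, h2⟩, h1⟩, fun ⟨⟨h0, h2⟩, h1⟩ => ⟨h0, h1, h2⟩⟩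
  have hf' : f = normalizeBy ω := funext fun x => by
    rw [hf, normalizeBy, dotProductBilin_apply_apply, dotProduct_comm]
    rfl
  have hg' : g = normalizeBy σ := funext fun y => by
    rw [hg, normalizeBy, dotProductBilin_apply_apply, one_dotProduct]
  subst hA' hB' hf' hg'
  have hC : ∀ x ∈ C, ∀ c : ℝ, 0 ≤ c → c • x ∈ C := fun x hx c hc => smul_mem_returnCone hx hc
  have hσ : ∀ x ∈ C, x ≠ 0 → 0 < σ x := fun x hx =>
    dotProduct_pos_of_ne_zero (fun _ => one_pos) hx.1
  have hω : ∀ x ∈ C, x ≠ 0 → 0 < ω x := fun x hx => dotProduct_pos_of_ne_zero hw hx.1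
  refine ⟨mapsTo_normalizeBy hC hω, mapsTo_normalizeBy hC hσ,
    leftInvOn_normalizeBy hω, leftInvOn_normalizeBy hσ, fun x ⟨hxC, hx⟩ => ?_⟩
  rw [map_normalizeBy_of_posHomogeneous hhom hxC.1 (hω x hxC (ne_zero_of_map_eq_one hx)).le,
    dotProductBilin_apply_apply, dotProduct_comm]
  rfl

/-- The map `x ↦ y = x/(∑ᵢ xᵢρᵢ)` is a bijection between
`{x ∈ Δ : ∑ μᵢxᵢ ≥ η}` and `{y ≥ 0 : ∑ ρᵢyᵢ = 1, ∑ μᵢyᵢ ≥ η ∑ yᵢ}` with inverse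
`y ↦ y/∑ yᵢ`, and it transforms `1/DR(x) = ρ(x)/(∑ xᵢρᵢ)` into `ρ(y)`. -/
theorem stmt9 (n : ℕ) (ρ : (Fin n → ℝ) → ℝ) (μ : Fin n → ℝ) (η : ℝ)
    (hpos : ∀ x : Fin n → ℝ, (∀ i, 0 ≤ x i) → x ≠ 0 → 0 < ρ x)
    (hconv : ∀ x y : Fin n → ℝ, (∀ i, 0 ≤ x i) → (∀ i, 0 ≤ y i) →
      ∀ t : ℝ, 0 ≤ t → t ≤ 1 → ρ (t • x + (1 - t) • y) ≤ t * ρ x + (1 - t) * ρ y)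
    (hhom : ∀ x : Fin n → ℝ, (∀ i, 0 ≤ x i) → ∀ t : ℝ, 0 ≤ t → ρ (t • x) = t * ρ x)
    (A B : Set (Fin n → ℝ))
    (hA : A = {x : Fin n → ℝ | (∀ i, 0 ≤ x i) ∧ (∑ i, x i) = 1 ∧ (∑ i, μ i * x i) ≥ η})
    (hB : B = {y : Fin n → ℝ | (∀ i, 0 ≤ y i) ∧ (∑ i, ρ (Pi.single i 1) * y i) = 1 ∧
      (∑ i, μ i * y i) ≥ η * ∑ i, y i})
    (f g : (Fin n → ℝ) → (Fin n → ℝ))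
    (hf : ∀ x, f x = (∑ i, x i * ρ (Pi.single i 1))⁻¹ • x)
    (hg : ∀ y, g y = (∑ i, y i)⁻¹ • y) :
    (∀ x ∈ A, f x ∈ B) ∧ (∀ y ∈ B, g y ∈ A) ∧
    (∀ x ∈ A, g (f x) = x) ∧ (∀ y ∈ B, f (g y) = y) ∧
    (∀ x ∈ A, ρ (f x) = ρ x / (∑ i, x i * ρ (Pi.single i 1))) :=
  stmt9_general n ρ μ η hpos hhom A B hA hB f g hf hg
end

section
/- (Expectile subadditivity for α ≥ 1/2) For α ∈ [1/2, 1) and X, Y ∈ L¹, the α-expectile satisfies eₐ(X + Y) ≤ eₐ(X) + eₐ(Y). -/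
open MeasureTheory

/-- (Expectile subadditivity for `α ≥ 1/2`) For `α ∈ [1/2,1)` and
integrable `X, Y`, `eₐ(X+Y) ≤ eₐ(X) + eₐ(Y)`. -/
theorem stmt16 {Ω : Type*} [MeasurableSpace Ω] (P : Measure Ω) [IsProbabilityMeasure P]
    (α : ℝ) (hα : α ∈ Set.Ico (1 / 2 : ℝ) 1)
    (X Y : Ω → ℝ) (hX : Integrable X P) (hY : Integrable Y P)
    (eX eY eXY : ℝ)
    (heX : α * ∫ ω, max (X ω - eX) 0 ∂P = (1 - α) * ∫ ω, max (eX - X ω) 0 ∂P)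
    (heY : α * ∫ ω, max (Y ω - eY) 0 ∂P = (1 - α) * ∫ ω, max (eY - Y ω) 0 ∂P)
    (heXY : α * ∫ ω, max (X ω + Y ω - eXY) 0 ∂P
      = (1 - α) * ∫ ω, max (eXY - (X ω + Y ω)) 0 ∂P) :
    eXY ≤ eX + eY := by
  obtain ⟨hα1, hα2⟩ := hα
  have hXY : Integrable (fun ω => X ω + Y ω) P := hX.add hY
  -- integrability of positive parts
  have hint : ∀ (Z : Ω → ℝ), Integrable Z P → ∀ e : ℝ,
      Integrable (fun ω => max (Z ω - e) 0) P := by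
    intro Z hZ e
    exact (hZ.sub (integrable_const e)).pos_part
  -- key identity: ∫ (e - Z)₊ = ∫ (Z - e)₊ - (∫ Z - e)
  have key : ∀ (Z : Ω → ℝ), Integrable Z P → ∀ e : ℝ,
      ∫ ω, max (e - Z ω) 0 ∂P
        = (∫ ω, max (Z ω - e) 0 ∂P) - ((∫ ω, Z ω ∂P) - e) := by
    intro Z hZ e
    have hpt : ∀ ω, max (e - Z ω) 0 = max (Z ω - e) 0 - (Z ω - e) := by
      intro ω
      rcases le_total (Z ω) e with h | h
      · rw [max_eq_left (by linarith), max_eq_right (by linarith)]; ring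
      · rw [max_eq_right (by linarith), max_eq_left (by linarith)]; ring
    calc ∫ ω, max (e - Z ω) 0 ∂P
        = ∫ ω, (max (Z ω - e) 0 - (Z ω - e)) ∂P := by
          exact integral_congr_ae (Filter.Eventually.of_forall hpt)
      _ = (∫ ω, max (Z ω - e) 0 ∂P) - ∫ ω, (Z ω - e) ∂P :=
          integral_sub (hint Z hZ e) (hZ.sub (integrable_const e))
      _ = (∫ ω, max (Z ω - e) 0 ∂P) - ((∫ ω, Z ω ∂P) - e) := by
          rw [integral_sub hZ (integrable_const e), integral_const]
          simp
  set IX := ∫ ω, max (X ω - eX) 0 ∂P with hIX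
  set IY := ∫ ω, max (Y ω - eY) 0 ∂P with hIY
  set IZ := ∫ ω, max (X ω + Y ω - eXY) 0 ∂P with hIZ
  set IZ' := ∫ ω, max (X ω + Y ω - (eX + eY)) 0 ∂P with hIZ'
  set EX := ∫ ω, X ω ∂P with hEX
  set EY := ∫ ω, Y ω ∂P with hEY
  have hEsum : ∫ ω, (X ω + Y ω) ∂P = EX + EY := integral_add hX hY
  rw [key X hX eX] at heX
  rw [key Y hY eY] at heY
  rw [key _ hXY eXY, hEsum] at heXY
  -- nonnegativity of the positive-part integrals
  have hIZnn : 0 ≤ IZ := integral_nonneg fun ω => le_max_right _ _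
  have hIZ'nn : 0 ≤ IZ' := integral_nonneg fun ω => le_max_right _ _
  -- subadditivity: IZ' ≤ IX + IY
  have hsub : IZ' ≤ IX + IY := by
    rw [hIX, hIY, ← integral_add (hint X hX eX) (hint Y hY eY)]
    apply integral_mono (hint _ hXY (eX + eY))
      ((hint X hX eX).add (hint Y hY eY))
    intro ω
    simp only [Pi.add_apply]
    have h1 : X ω + Y ω - (eX + eY) = (X ω - eX) + (Y ω - eY) := by ring
    rw [h1]
    rcases le_total (X ω - eX + (Y ω - eY)) 0 with h | h
    · rw [max_eq_right h]
      exact add_nonneg (le_max_right _ _) (le_max_right _ _)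
    · rw [max_eq_left h]
      exact add_le_add (le_max_left _ _) (le_max_left _ _)
  by_contra hcon
  push_neg at hcon
  -- monotonicity: since eX + eY < eXY, IZ ≤ IZ'
  have hmono : IZ ≤ IZ' := by
    apply integral_mono (hint _ hXY eXY) (hint _ hXY (eX + eY))
    intro ω
    exact max_le_max (by linarith) le_rfl
  nlinarith [mul_le_mul_of_nonneg_left hsub (by linarith : (0:ℝ) ≤ 2 * α - 1),
    mul_le_mul_of_nonneg_left hmono (by linarith : (0:ℝ) ≤ 2 * α - 1),
    mul_pos (by linarith : (0:ℝ) < 1 - α) (by linarith : (0:ℝ) < eXY - (eX + eY))]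
end

section
/- (Rockafellar–Uryasev representation attains CVaR at a quantile, discrete case) Let v ∈ ℝ^T with ordered values v₍₁₎ ≤ … ≤ v₍T₎, and let ε = j/T for an integer 1 ≤ j ≤ T. Then min over ζ ∈ ℝ of [ζ + (1/(εT)) ∑ₜ max(-vₜ - ζ, 0)] equals -(1/j) ∑ₜ₌₁^j v₍ₜ₎, i.e., the Rockafellar–Uryasev formula computes the average of the j worst (smallest) returns with sign reversed. -/
/-- (Rockafellar–Uryasev representation, discrete case) For `ε = j/T`, the
minimum over `ζ` of `ζ + (1/(εT)) ∑ₜ (−vₜ−ζ)₊` is attained and equals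
`-(1/j) ∑ₜ₌₁^j v₍ₜ₎`, the negated average of the `j` smallest values of `v`. -/
theorem stmt19 (T : ℕ) (hT : 1 ≤ T) (j : ℕ) (hj1 : 1 ≤ j) (hjT : j ≤ T)
    (ε : ℝ) (hε : ε = (j : ℝ) / T)
    (v w : Fin T → ℝ) (e : Equiv.Perm (Fin T))
    (hw : Monotone w) (hwe : ∀ t, w t = v (e t)) :
    IsLeast (Set.range fun ζ : ℝ => ζ + (1 / (ε * T)) * ∑ t, max (-v t - ζ) 0)
      (-(1 / (j : ℝ)) * ∑ t ∈ Finset.univ.filter (fun t : Fin T => (t : ℕ) < j), w t) := by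
  have hT0 : (T : ℝ) ≠ 0 := by
    exact_mod_cast Nat.one_le_iff_ne_zero.mp hT
  have hj0 : (j : ℝ) ≠ 0 := by
    exact_mod_cast Nat.one_le_iff_ne_zero.mp hj1
  have hjpos : (0:ℝ) < j := by positivity
  have hεT : ε * T = j := by rw [hε]; field_simp
  have hsum : ∀ ζ : ℝ, ∑ t, max (-v t - ζ) 0 = ∑ t, max (-w t - ζ) 0 := by
    intro ζ
    rw [← Equiv.sum_comp e (fun t => max (-v t - ζ) 0)]
    exact Finset.sum_congr rfl (fun t _ => by rw [hwe t])
  set S := Finset.univ.filter (fun t : Fin T => (t : ℕ) < j) with hS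
  have hcard : S.card = j := by
    rw [hS, Finset.card_filter]
    rw [Fin.sum_univ_eq_sum_range (fun i => if i < j then 1 else 0)]
    rw [← Finset.card_filter]
    rw [show (Finset.range T).filter (fun i => i < j) = Finset.range j by
      ext x; simp; omega]
    simp
  constructor
  · -- attained at ζ₀ = -w ⟨j-1⟩
    have hj1T : j - 1 < T := by omega
    set a : Fin T := ⟨j - 1, hj1T⟩ with ha
    refine ⟨-w a, ?_⟩
    have hsplit : ∑ t, max (-w t - (-w a)) 0 = ∑ t ∈ S, (w a - w t) := by
      rw [← Finset.sum_filter_add_sum_filter_not Finset.univ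
        (fun t : Fin T => (t : ℕ) < j) (fun t => max (-w t - (-w a)) 0)]
      have h1 : ∑ t ∈ S, max (-w t - (-w a)) 0 = ∑ t ∈ S, (w a - w t) := by
        refine Finset.sum_congr rfl (fun t ht => ?_)
        have htj : (t : ℕ) < j := by simpa [hS] using ht
        have : w t ≤ w a := hw (by simp [ha, Fin.le_def]; omega)
        rw [max_eq_left (by linarith)]; ring
      have h2 : ∑ t ∈ Finset.univ.filter (fun t : Fin T => ¬ (t : ℕ) < j),
          max (-w t - (-w a)) 0 = 0 := by
        refine Finset.sum_eq_zero (fun t ht => ?_)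
        have htj : ¬ (t : ℕ) < j := by simpa using ht
        have : w a ≤ w t := hw (by simp [ha, Fin.le_def]; omega)
        rw [max_eq_right (by linarith)]
      rw [h1, h2, add_zero]
    show -w a + 1 / (ε * ↑T) * ∑ t, max (-v t - -w a) 0 = _
    rw [hsum, hsplit, hεT, Finset.sum_sub_distrib, Finset.sum_const, hcard]
    field_simp
    ring
  · rintro x ⟨ζ, rfl⟩
    simp only
    rw [hsum, hεT]
    have hlb : ∑ t ∈ S, (-w t - ζ) ≤ ∑ t, max (-w t - ζ) 0 := by
      calc ∑ t ∈ S, (-w t - ζ) ≤ ∑ t ∈ S, max (-w t - ζ) 0 :=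
            Finset.sum_le_sum (fun t _ => le_max_left _ _)
        _ ≤ ∑ t, max (-w t - ζ) 0 :=
            Finset.sum_le_sum_of_subset_of_nonneg (Finset.filter_subset _ _)
              (fun t _ _ => le_max_right _ _)
    have hSsum : ∑ t ∈ S, (-w t - ζ) = -(∑ t ∈ S, w t) - j * ζ := by
      rw [Finset.sum_sub_distrib, Finset.sum_const, hcard, ← Finset.sum_neg_distrib]
      ring
    rw [hSsum] at hlb
    have h2 : -(∑ t ∈ S, w t) ≤ (j:ℝ)*ζ + ∑ t, max (-w t - ζ) 0 := by linarith
    calc -(1/(j:ℝ)) * ∑ t ∈ S, w t = (-(∑ t ∈ S, w t)) / j := by ring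
      _ ≤ ((j:ℝ)*ζ + ∑ t, max (-w t - ζ) 0) / j := by
          exact div_le_div_of_nonneg_right h2 hjpos.le
      _ = ζ + 1 / (j:ℝ) * ∑ t, max (-w t - ζ) 0 := by field_simp
end
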